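/- Let R be the 4×4 complex matrix, rows and columns indexed by Fin 2 × Fin 2 in lexicographic order, given by R = (−e^{−iπ/4}/√2)·[[1, 0, 0, 1], [0, 1, −1, 0], [0, 1, 1, 0], [−1, 0, 0, 1]]. Then: (a) R is unitary; and (b) R satisfies the Yang–Baxter equation (R ⊗ I₂)(I₂ ⊗ R)(R ⊗ I₂) = (I₂ ⊗ R)(R ⊗ I₂)(I₂ ⊗ R) as matrices indexed by Fin 2 × Fin 2 × Fin 2. Hence R gives an explicit localization of the Jones representations of the braid groups at level 2 (the Ising theory). -/
import Mathlib

set_option maxHeartbeats 1000000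

open Matrix

/-- Lexicographic encoding of `Fin 2 × Fin 2` into `Fin 4`. -/
def enc22 : Fin 2 × Fin 2 → Fin 4 :=
  fun p => ⟨2 * p.1.val + p.2.val, by have := p.1.isLt; have := p.2.isLt; omega⟩

/-- The localizing `R`-matrix of the level-2 (Ising) Jones representation:
`R = (-e^{-iπ/4}/√2)·[[1,0,0,1],[0,1,-1,0],[0,1,1,0],[-1,0,0,1]]`,
indexed by `Fin 2 × Fin 2` in lexicographic order. -/
noncomputable def RIsing : Matrix (Fin 2 × Fin 2) (Fin 2 × Fin 2) ℂ :=
  fun p q =>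
    (-Complex.exp (-(Real.pi) * Complex.I / 4) / ((Real.sqrt 2 : ℝ) : ℂ)) *
      (!![1, 0, 0, 1;
          0, 1, -1, 0;
          0, 1, 1, 0;
          -1, 0, 0, 1] : Matrix (Fin 4) (Fin 4) ℂ) (enc22 p) (enc22 q)

/-- `R ⊗ I₂`, reassociated to a matrix indexed by `Fin 2 × Fin 2 × Fin 2`. -/
noncomputable def RIsing12 : Matrix (Fin 2 × Fin 2 × Fin 2) (Fin 2 × Fin 2 × Fin 2) ℂ :=
  Matrix.reindex (Equiv.prodAssoc (Fin 2) (Fin 2) (Fin 2)) (Equiv.prodAssoc (Fin 2) (Fin 2) (Fin 2))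
    (Matrix.kroneckerMap (· * ·) RIsing (1 : Matrix (Fin 2) (Fin 2) ℂ))

/-- `I₂ ⊗ R`, a matrix indexed by `Fin 2 × Fin 2 × Fin 2`. -/
noncomputable def RIsing23 : Matrix (Fin 2 × Fin 2 × Fin 2) (Fin 2 × Fin 2 × Fin 2) ℂ :=
  Matrix.kroneckerMap (· * ·) (1 : Matrix (Fin 2) (Fin 2) ℂ) RIsing

/-- The integer matrix underlying `RIsing`. -/
def MIsingZ : Matrix (Fin 2 × Fin 2) (Fin 2 × Fin 2) ℤ := fun p q =>
  (!![1,0,0,1;0,1,-1,0;0,1,1,0;-1,0,0,1] : Matrix (Fin 4) (Fin 4) ℤ) (enc22 p) (enc22 q)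

/-- Integer version of `RIsing12`. -/
def MIsingZ12 : Matrix (Fin 2 × Fin 2 × Fin 2) (Fin 2 × Fin 2 × Fin 2) ℤ :=
  Matrix.reindex (Equiv.prodAssoc (Fin 2) (Fin 2) (Fin 2)) (Equiv.prodAssoc (Fin 2) (Fin 2) (Fin 2))
    (Matrix.kroneckerMap (· * ·) MIsingZ (1 : Matrix (Fin 2) (Fin 2) ℤ))

/-- Integer version of `RIsing23`. -/
def MIsingZ23 : Matrix (Fin 2 × Fin 2 × Fin 2) (Fin 2 × Fin 2 × Fin 2) ℤ :=
  Matrix.kroneckerMap (· * ·) (1 : Matrix (Fin 2) (Fin 2) ℤ) MIsingZ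

/-- The integer Yang–Baxter identity, by exhaustive computation. -/
lemma MIsingZ_yang_baxter : MIsingZ12 * MIsingZ23 * MIsingZ12 = MIsingZ23 * MIsingZ12 * MIsingZ23 := by
  decide

lemma RIsing_eq_smul :
    RIsing = (-Complex.exp (-(Real.pi) * Complex.I / 4) / ((Real.sqrt 2 : ℝ) : ℂ)) •
      (MIsingZ.map (Int.castRingHom ℂ)) := by
  ext ⟨a,b⟩ ⟨x,y⟩
  fin_cases a <;> fin_cases b <;> fin_cases x <;> fin_cases y <;>
    simp [RIsing, MIsingZ, enc22, Matrix.map_apply]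

lemma RIsing12_eq_smul :
    RIsing12 = (-Complex.exp (-(Real.pi) * Complex.I / 4) / ((Real.sqrt 2 : ℝ) : ℂ)) •
      (MIsingZ12.map (Int.castRingHom ℂ)) := by
  ext ⟨a,b,c⟩ ⟨x,y,z⟩
  simp only [RIsing12, MIsingZ12, Matrix.reindex_apply, Matrix.submatrix_apply,
    Matrix.kroneckerMap_apply, RIsing_eq_smul, Matrix.smul_apply, Matrix.map_apply,
    Matrix.one_apply, smul_eq_mul]
  split_ifs <;> (try push_cast) <;> (try ring) <;> simp

lemma RIsing23_eq_smul :
    RIsing23 = (-Complex.exp (-(Real.pi) * Complex.I / 4) / ((Real.sqrt 2 : ℝ) : ℂ)) •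
      (MIsingZ23.map (Int.castRingHom ℂ)) := by
  ext ⟨a,b,c⟩ ⟨x,y,z⟩
  simp only [RIsing23, MIsingZ23, Matrix.kroneckerMap_apply, RIsing_eq_smul,
    Matrix.smul_apply, Matrix.map_apply, Matrix.one_apply, smul_eq_mul]
  split_ifs <;> (try push_cast) <;> (try ring) <;> simp

/-- `R` is unitary and satisfies the Yang–Baxter equation, giving an explicit
localization of the level-2 (Ising) Jones representations of the braid groups. -/
theorem RIsing_unitary_and_yang_baxter :
    RIsing ∈ Matrix.unitaryGroup (Fin 2 × Fin 2) ℂ ∧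
    RIsing12 * RIsing23 * RIsing12 = RIsing23 * RIsing12 * RIsing23 := by
  constructor
  · have he : Complex.exp (-(Real.pi) * Complex.I / 4) *
        (starRingEnd ℂ) (Complex.exp (-(Real.pi) * Complex.I / 4)) = 1 := by
      rw [← Complex.exp_conj, ← Complex.exp_add]
      have : (-(Real.pi) * Complex.I / 4) + (starRingEnd ℂ) (-(Real.pi) * Complex.I / 4) = 0 := by
        simp only [map_div₀, map_neg, _root_.map_mul, Complex.conj_I, Complex.conj_ofReal,
          map_ofNat]
        ring
      rw [this, Complex.exp_zero]
    rw [show (-(Real.pi : ℂ) * Complex.I / 4) = (-((Real.pi : ℂ) * Complex.I) / 4) from by ring]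
      at he
    have hs : ((Real.sqrt 2 : ℝ) : ℂ) * ((Real.sqrt 2 : ℝ) : ℂ) = 2 := by
      rw [← Complex.ofReal_mul, Real.mul_self_sqrt (by norm_num)]; norm_num
    rw [Matrix.mem_unitaryGroup_iff]
    ext ⟨a,b⟩ ⟨x,y⟩
    fin_cases a <;> fin_cases b <;> fin_cases x <;> fin_cases y <;>
      simp [RIsing, enc22, Matrix.mul_apply, Fintype.sum_prod_type, Fin.sum_univ_two,
        Matrix.one_apply, Matrix.star_apply, Complex.star_def, _root_.map_mul, map_div₀, map_neg,
        Complex.conj_ofReal, neg_mul, Prod.ext_iff] <;>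
      (try field_simp) <;> (try ring_nf at he ⊢) <;>
      (try ring) <;> (try linear_combination 2 * he - hs) <;> linear_combination hs - 2 * he
  · have key : (MIsingZ12.map (Int.castRingHom ℂ)) * (MIsingZ23.map (Int.castRingHom ℂ)) *
        (MIsingZ12.map (Int.castRingHom ℂ)) =
        (MIsingZ23.map (Int.castRingHom ℂ)) * (MIsingZ12.map (Int.castRingHom ℂ)) *
        (MIsingZ23.map (Int.castRingHom ℂ)) := by
      rw [← Matrix.map_mul, ← Matrix.map_mul, ← Matrix.map_mul, ← Matrix.map_mul,
        MIsingZ_yang_baxter]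
    rw [RIsing12_eq_smul, RIsing23_eq_smul]
    simp only [smul_mul_assoc, mul_smul_comm, key]
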